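/- arXiv:1703.00658 — 2 statements merged into one kernel-verified Lean document; each statement's English description precedes it below -/
import Mathlib

section
/- Let H be a Hilbert space and f : (τ,T) → H a measurable function with f(t) ≠ 0 for a.e. t. Let ū* ∈ L^∞(τ,T;H) with ‖ū*(t)‖ ≤ 1 a.e. Suppose that for all ū with ‖ū(t)‖ ≤ 1 a.e., ∫_τ^T ⟨ū(σ), f(σ)⟩ dσ ≤ ∫_τ^T ⟨ū*(σ), f(σ)⟩ dσ. Then ‖ū*(t)‖ = 1 for a.e. t ∈ (τ,T). -/
/-!
Testing against the admissible control `‖f‖⁻¹ • f` gives `∫ ‖f‖ ≤ ∫ ⟪ū*, f⟫`, while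
Cauchy–Schwarz gives `⟪ū*, f⟫ ≤ ‖f‖` pointwise. Hence `⟪ū*, f⟫ = ‖f‖` a.e., and the equality
case of Cauchy–Schwarz forces `‖ū*‖ = 1` wherever `f ≠ 0`.
-/

open MeasureTheory Set
open scoped RealInnerProductSpace

section

variable {H : Type*} [NormedAddCommGroup H] [InnerProductSpace ℝ H]

lemma real_inner_inv_norm_smul_self (x : H) : ⟪‖x‖⁻¹ • x, x⟫ = ‖x‖ := by
  rcases eq_or_ne x 0 with rfl | hx
  · simp
  · rw [real_inner_smul_left, real_inner_self_eq_norm_sq]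
    field_simp [norm_ne_zero_iff.2 hx]

lemma norm_inv_norm_smul_le_one (x : H) : ‖‖x‖⁻¹ • x‖ ≤ 1 := by
  rcases eq_or_ne x 0 with rfl | hx
  · simp
  · exact (norm_smul_inv_norm hx).le

lemma real_inner_le_norm_of_norm_le_one {u : H} (hu : ‖u‖ ≤ 1) (x : H) : ⟪u, x⟫ ≤ ‖x‖ :=
  (real_inner_le_norm u x).trans (mul_le_of_le_one_left (norm_nonneg x) hu)

lemma norm_eq_one_of_real_inner_eq_norm {u x : H} (hu : ‖u‖ ≤ 1) (hx : x ≠ 0)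
    (h : ⟪u, x⟫ = ‖x‖) : ‖u‖ = 1 := by
  have hx_pos : 0 < ‖x‖ := norm_pos_iff.2 hx
  have : ‖x‖ ≤ ‖u‖ * ‖x‖ := h ▸ real_inner_le_norm u x
  exact le_antisymm hu (le_of_mul_le_mul_right (by simpa using this) hx_pos)

variable {α : Type*} [MeasurableSpace α] {μ : Measure α} {f u : α → H}

lemma integrable_inner_of_norm_le_one (hf : Integrable f μ) (hu : AEStronglyMeasurable u μ)
    (hu_bd : ∀ᵐ t ∂μ, ‖u t‖ ≤ 1) : Integrable (fun t ↦ ⟪u t, f t⟫) μ := by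
  refine hf.norm.mono' (hu.inner hf.aestronglyMeasurable) ?_
  filter_upwards [hu_bd] with t ht
  simpa using (abs_real_inner_le_norm (u t) (f t)).trans
    (mul_le_of_le_one_left (norm_nonneg _) ht)

lemma integral_norm_le_of_forall_integral_inner_le {c : ℝ} (hf : Integrable f μ)
    (hmax : ∀ u : α → H, AEStronglyMeasurable u μ → (∀ᵐ t ∂μ, ‖u t‖ ≤ 1) →
      ∫ t, ⟪u t, f t⟫ ∂μ ≤ c) :
    ∫ t, ‖f t‖ ∂μ ≤ c := by
  have hdir : AEStronglyMeasurable (fun t ↦ ‖f t‖⁻¹ • f t) μ :=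
    hf.aestronglyMeasurable.norm.aemeasurable.inv.aestronglyMeasurable.smul
      hf.aestronglyMeasurable
  simpa only [real_inner_inv_norm_smul_self] using
    hmax _ hdir (.of_forall fun t ↦ norm_inv_norm_smul_le_one (f t))

lemma real_inner_ae_eq_norm_of_integral_norm_le (hf : Integrable f μ)
    (hu : AEStronglyMeasurable u μ) (hu_bd : ∀ᵐ t ∂μ, ‖u t‖ ≤ 1)
    (h : ∫ t, ‖f t‖ ∂μ ≤ ∫ t, ⟪u t, f t⟫ ∂μ) :
    (fun t ↦ ⟪u t, f t⟫) =ᵐ[μ] fun t ↦ ‖f t‖ := by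
  have hle : (fun t ↦ ⟪u t, f t⟫) ≤ᵐ[μ] fun t ↦ ‖f t‖ := by
    filter_upwards [hu_bd] with t ht using real_inner_le_norm_of_norm_le_one ht (f t)
  have hint := integrable_inner_of_norm_le_one hf hu hu_bd
  exact (integral_eq_iff_of_ae_le hint hf.norm hle).1
    (le_antisymm (integral_mono_ae hint hf.norm hle) h)

end

theorem bang_bang_of_maximizer_general
    {H : Type*} [NormedAddCommGroup H] [InnerProductSpace ℝ H]
    (τ T : ℝ)
    (f : ℝ → H) (hf_int : IntegrableOn f (Ioo τ T))
    (hf_ne : ∀ᵐ t ∂(volume.restrict (Ioo τ T)), f t ≠ 0)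
    (ustar : ℝ → H)
    (hustar_meas : AEStronglyMeasurable ustar (volume.restrict (Ioo τ T)))
    (hustar_bd : ∀ᵐ t ∂(volume.restrict (Ioo τ T)), ‖ustar t‖ ≤ 1)
    (hmax : ∀ u : ℝ → H, AEStronglyMeasurable u (volume.restrict (Ioo τ T)) →
      (∀ᵐ t ∂(volume.restrict (Ioo τ T)), ‖u t‖ ≤ 1) →
      ∫ σ in Ioo τ T, ⟪u σ, f σ⟫ ≤ ∫ σ in Ioo τ T, ⟪ustar σ, f σ⟫) :
    ∀ᵐ t ∂(volume.restrict (Ioo τ T)), ‖ustar t‖ = 1 := by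
  have hinner_eq := real_inner_ae_eq_norm_of_integral_norm_le hf_int hustar_meas hustar_bd
    (integral_norm_le_of_forall_integral_inner_le hf_int hmax)
  filter_upwards [hinner_eq, hf_ne, hustar_bd] with t ht hft hbd
  exact norm_eq_one_of_real_inner_eq_norm hbd hft ht

/-- Abstract maximum principle: if `ū*` with `‖ū* t‖ ≤ 1` a.e. maximizes
`∫ ⟨ū, f⟩` over all `ū` with `‖ū t‖ ≤ 1` a.e., and `f ≠ 0` a.e., then `‖ū* t‖ = 1` a.e. -/
theorem bang_bang_of_maximizer
    {H : Type*} [NormedAddCommGroup H] [InnerProductSpace ℝ H]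
    (τ T : ℝ) (hτ : 0 ≤ τ) (hτT : τ < T)
    (f : ℝ → H) (hf_int : IntegrableOn f (Ioo τ T))
    (hf_ne : ∀ᵐ t ∂(volume.restrict (Ioo τ T)), f t ≠ 0)
    (ustar : ℝ → H)
    (hustar_meas : AEStronglyMeasurable ustar (volume.restrict (Ioo τ T)))
    (hustar_bd : ∀ᵐ t ∂(volume.restrict (Ioo τ T)), ‖ustar t‖ ≤ 1)
    (hmax : ∀ u : ℝ → H, AEStronglyMeasurable u (volume.restrict (Ioo τ T)) →
      (∀ᵐ t ∂(volume.restrict (Ioo τ T)), ‖u t‖ ≤ 1) →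
      ∫ σ in Ioo τ T, ⟪u σ, f σ⟫ ≤ ∫ σ in Ioo τ T, ⟪ustar σ, f σ⟫) :
    ∀ᵐ t ∂(volume.restrict (Ioo τ T)), ‖ustar t‖ = 1 :=
  bang_bang_of_maximizer_general τ T f hf_int hf_ne ustar hustar_meas hustar_bd hmax
end

section
/- Let H be a Hilbert space, g ∈ L¹(0,T;H), and let t₀ ∈ (0,T) be a Lebesgue point of g. Suppose ū* ∈ L^∞(0,T;H) and t₀ is also a Lebesgue point of σ ↦ ⟨ū*(σ), g(σ)⟩. If for every ζ ∈ H with ‖ζ‖ ≤ 1 and every small λ > 0 one has ∫_{t₀-λ}^{t₀+λ} ⟨ζ, g(σ)⟩ dσ ≤ ∫_{t₀-λ}^{t₀+λ} ⟨ū*(σ), g(σ)⟩ dσ, then ‖g(t₀)‖ ≤ ⟨ū*(t₀), g(t₀)⟩, and hence ‖ū*(t₀)‖ ≥ 1 whenever g(t₀) ≠ 0. -/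
open MeasureTheory Filter Set
open scoped RealInnerProductSpace Topology

/-!
Testing the averaged inequality against a fixed `ζ` and letting `λ → 0⁺`, the Lebesgue point
hypotheses turn both sides into point values, so `⟪ζ, g t₀⟫ ≤ ⟪ū* t₀, g t₀⟫` for every `ζ` in
the unit ball. Taking `ζ = g t₀ / ‖g t₀‖` gives `‖g t₀‖ ≤ ⟪ū* t₀, g t₀⟫`, and Cauchy–Schwarz
then forces `‖ū* t₀‖ ≥ 1` when `g t₀ ≠ 0`.
-/

lemma eventually_Ioo_sub_add_subset_of_mem_nhds {s : Set ℝ} {t₀ : ℝ} (hs : s ∈ 𝓝 t₀) :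
    ∀ᶠ lam in 𝓝[>] (0 : ℝ), Ioo (t₀ - lam) (t₀ + lam) ⊆ s := by
  obtain ⟨ε, hε, hball⟩ := Metric.mem_nhds_iff.1 hs
  filter_upwards [nhdsWithin_le_nhds (eventually_lt_nhds hε)] with lam hlam
  rw [Real.ball_eq_Ioo] at hball
  exact (Ioo_subset_Ioo (by linarith) (by linarith)).trans hball

lemma average_Ioo_sub_add_const {E : Type*} [NormedAddCommGroup E] [NormedSpace ℝ E]
    [CompleteSpace E] {t₀ lam : ℝ} (hlam : 0 < lam) (c : E) :
    (1 / (2 * lam)) • ∫ _ in Ioo (t₀ - lam) (t₀ + lam), c = c := by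
  rw [setIntegral_const, measureReal_def, Real.volume_Ioo,
    ENNReal.toReal_ofReal (by linarith), smul_smul,
    show t₀ + lam - (t₀ - lam) = 2 * lam by ring, one_div_mul_cancel (by positivity), one_smul]

theorem tendsto_average_Ioo_comp_of_lebesgue_point
    {E F : Type*} [NormedAddCommGroup E] [NormedSpace ℝ E]
    [NormedAddCommGroup F] [NormedSpace ℝ F] [CompleteSpace F]
    (L : E →L[ℝ] F) {g : ℝ → E} {t₀ : ℝ}
    (hint : ∀ᶠ lam in 𝓝[>] (0 : ℝ), IntegrableOn g (Ioo (t₀ - lam) (t₀ + lam)))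
    (hLeb : Tendsto
      (fun lam : ℝ => (1 / (2 * lam)) * ∫ σ in Ioo (t₀ - lam) (t₀ + lam), ‖g σ - g t₀‖)
      (𝓝[>] 0) (𝓝 0)) :
    Tendsto (fun lam : ℝ => (1 / (2 * lam)) • ∫ σ in Ioo (t₀ - lam) (t₀ + lam), L (g σ))
      (𝓝[>] 0) (𝓝 (L (g t₀))) := by
  have hlim := hLeb.const_mul ‖L‖
  rw [mul_zero] at hlim
  rw [tendsto_iff_norm_sub_tendsto_zero]
  refine squeeze_zero' (Eventually.of_forall fun _ => norm_nonneg _) ?_ hlim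
  filter_upwards [hint, self_mem_nhdsWithin] with lam hg (hlam : 0 < lam)
  have hconst : IntegrableOn (fun _ => g t₀) (Ioo (t₀ - lam) (t₀ + lam)) :=
    integrableOn_const (by simp [Real.volume_Ioo])
  have hsub : (1 / (2 * lam)) • (∫ σ in Ioo (t₀ - lam) (t₀ + lam), L (g σ)) - L (g t₀)
      = (1 / (2 * lam)) • ∫ σ in Ioo (t₀ - lam) (t₀ + lam), L (g σ - g t₀) := by
    simp_rw [map_sub]
    rw [integral_sub (L.integrable_comp hg) (L.integrable_comp hconst), smul_sub,
      average_Ioo_sub_add_const hlam]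
  have hbound : ‖∫ σ in Ioo (t₀ - lam) (t₀ + lam), L (g σ - g t₀)‖
      ≤ ‖L‖ * ∫ σ in Ioo (t₀ - lam) (t₀ + lam), ‖g σ - g t₀‖ := by
    rw [← integral_const_mul]
    exact norm_integral_le_of_norm_le ((hg.sub hconst).norm.const_mul _)
      (Eventually.of_forall fun σ => L.le_opNorm _)
  rw [hsub, norm_smul, Real.norm_of_nonneg (by positivity), mul_left_comm]
  gcongr

theorem norm_le_of_forall_inner_le {H : Type*} [NormedAddCommGroup H] [InnerProductSpace ℝ H]
    {x : H} {c : ℝ} (h : ∀ ζ : H, ‖ζ‖ ≤ 1 → ⟪ζ, x⟫ ≤ c) : ‖x‖ ≤ c := by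
  rcases eq_or_ne x 0 with rfl | hx
  · simpa using h 0 (by simp)
  · have hx' : ‖x‖ ≠ 0 := norm_ne_zero_iff.2 hx
    have hunit : ‖‖x‖⁻¹ • x‖ ≤ 1 := by rw [norm_smul, norm_inv, norm_norm, inv_mul_cancel₀ hx']
    have hζ := h _ hunit
    rwa [real_inner_smul_left, real_inner_self_eq_norm_mul_norm, ← mul_assoc,
      inv_mul_cancel₀ hx', one_mul] at hζ

theorem one_le_norm_of_norm_le_inner {H : Type*} [NormedAddCommGroup H]
    [InnerProductSpace ℝ H] {u x : H} (h : ‖x‖ ≤ ⟪u, x⟫) (hx : x ≠ 0) : 1 ≤ ‖u‖ := by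
  have hcs : ⟪u, x⟫ ≤ ‖u‖ * ‖x‖ := real_inner_le_norm u x
  have hpos : 0 < ‖x‖ := norm_pos_iff.2 hx
  nlinarith

theorem pointwise_maximum_principle_at_lebesgue_point_general
    {H : Type*} [NormedAddCommGroup H] [InnerProductSpace ℝ H]
    (T t₀ : ℝ) (ht₀ : t₀ ∈ Ioo 0 T)
    (g : ℝ → H) (hg_int : IntegrableOn g (Ioo 0 T))
    (ustar : ℝ → H)
    (hLeb_g : Tendsto
      (fun lam : ℝ => (1 / (2 * lam)) * ∫ σ in Ioo (t₀ - lam) (t₀ + lam), ‖g σ - g t₀‖)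
      (𝓝[>] 0) (𝓝 0))
    (hLeb_ug : Tendsto
      (fun lam : ℝ => (1 / (2 * lam)) * ∫ σ in Ioo (t₀ - lam) (t₀ + lam), ⟪ustar σ, g σ⟫)
      (𝓝[>] 0) (𝓝 ⟪ustar t₀, g t₀⟫))
    (hineq : ∃ lam₀ > 0, ∀ lam ∈ Ioo (0 : ℝ) lam₀, ∀ ζ : H, ‖ζ‖ ≤ 1 →
      ∫ σ in Ioo (t₀ - lam) (t₀ + lam), ⟪ζ, g σ⟫ ≤
        ∫ σ in Ioo (t₀ - lam) (t₀ + lam), ⟪ustar σ, g σ⟫) :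
    ‖g t₀‖ ≤ ⟪ustar t₀, g t₀⟫ ∧ (g t₀ ≠ 0 → 1 ≤ ‖ustar t₀‖) := by
  obtain ⟨lam₀, hlam₀, hineq⟩ := hineq
  have hint : ∀ᶠ lam in 𝓝[>] (0 : ℝ), IntegrableOn g (Ioo (t₀ - lam) (t₀ + lam)) :=
    (eventually_Ioo_sub_add_subset_of_mem_nhds (Ioo_mem_nhds ht₀.1 ht₀.2)).mono
      fun _ hsub => hg_int.mono_set hsub
  have hpoint : ∀ ζ : H, ‖ζ‖ ≤ 1 → ⟪ζ, g t₀⟫ ≤ ⟪ustar t₀, g t₀⟫ := by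
    intro ζ hζ
    have hζ_avg := tendsto_average_Ioo_comp_of_lebesgue_point (innerSL ℝ ζ) hint hLeb_g
    simp only [innerSL_apply_apply, smul_eq_mul] at hζ_avg
    refine le_of_tendsto_of_tendsto hζ_avg hLeb_ug ?_
    filter_upwards [self_mem_nhdsWithin, Ioo_mem_nhdsGT hlam₀] with lam (hlam : 0 < lam) hlam'
    exact mul_le_mul_of_nonneg_left (hineq lam hlam' ζ hζ) (by positivity)
  have hnorm := norm_le_of_forall_inner_le hpoint
  exact ⟨hnorm, one_le_norm_of_norm_le_inner hnorm⟩

/-- At a Lebesgue point `t₀` of `g` and of `σ ↦ ⟨ū* σ, g σ⟫`, if the averaged inequality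
`∫ ⟨ζ, g⟩ ≤ ∫ ⟨ū*, g⟩` holds on small symmetric intervals for all unit-ball `ζ`, then
`‖g t₀‖ ≤ ⟨ū* t₀, g t₀⟩`, and `‖ū* t₀‖ ≥ 1` whenever `g t₀ ≠ 0`. -/
theorem pointwise_maximum_principle_at_lebesgue_point
    {H : Type*} [NormedAddCommGroup H] [InnerProductSpace ℝ H]
    (T t₀ : ℝ) (ht₀ : t₀ ∈ Ioo 0 T)
    (g : ℝ → H) (hg_int : IntegrableOn g (Ioo 0 T))
    (ustar : ℝ → H) (hustar_mem : MemLp ustar ⊤ (volume.restrict (Ioo 0 T)))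
    (hLeb_g : Tendsto
      (fun lam : ℝ => (1 / (2 * lam)) * ∫ σ in Ioo (t₀ - lam) (t₀ + lam), ‖g σ - g t₀‖)
      (𝓝[>] 0) (𝓝 0))
    (hLeb_ug : Tendsto
      (fun lam : ℝ => (1 / (2 * lam)) * ∫ σ in Ioo (t₀ - lam) (t₀ + lam), ⟪ustar σ, g σ⟫)
      (𝓝[>] 0) (𝓝 ⟪ustar t₀, g t₀⟫))
    (hineq : ∃ lam₀ > 0, ∀ lam ∈ Ioo (0 : ℝ) lam₀, ∀ ζ : H, ‖ζ‖ ≤ 1 →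
      ∫ σ in Ioo (t₀ - lam) (t₀ + lam), ⟪ζ, g σ⟫ ≤
        ∫ σ in Ioo (t₀ - lam) (t₀ + lam), ⟪ustar σ, g σ⟫) :
    ‖g t₀‖ ≤ ⟪ustar t₀, g t₀⟫ ∧ (g t₀ ≠ 0 → 1 ≤ ‖ustar t₀‖) :=
  pointwise_maximum_principle_at_lebesgue_point_general T t₀ ht₀ g hg_int ustar hLeb_g hLeb_ug hineq
end
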